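/- For x ∈ ℝ, the function x ↦ 2√π · e^{x²} (1 + erf(x)) equals 2∫_0^∞ e^{xt} e^{−t²/4} dt; consequently x ↦ 2√π e^{x²}(1 − erf(x)) = 2∫_0^∞ e^{−xt} e^{−t²/4} dt is completely monotonic on ℝ: (−1)^n (d/dx)^n [2√π e^{x²}(1−erf(x))] ≥ 0 for all n ∈ ℕ and all x ∈ ℝ. -/

import Mathlib

/-!
Completing the square, `x t - t² / 4 = x² - (t / 2 - x)²`, and substituting `v = t / 2 - x` turn
`∫₀^∞ e^{x t} e^{-t²/4} dt` into `2 e^{x²} ∫_{-x}^∞ e^{-v²} dv = √π e^{x²} (1 + erf x)`; since `erf`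
is odd, replacing `x` by `-x` gives the representation of `2√π e^{x²} (1 - erf x)`.
Differentiating under the integral sign, the `n`-th derivative of `∫₀^∞ e^{-x t} e^{-t²/4} dt`
is `(-1)ⁿ ∫₀^∞ tⁿ e^{-x t} e^{-t²/4} dt`, and this last integrand is nonnegative.
-/

open MeasureTheory

/-- The error function `erf(x) = (2/√π) ∫₀ˣ e^{-s²} ds`. -/
noncomputable def erf (x : ℝ) : ℝ :=
  (2 / Real.sqrt Real.pi) * ∫ s in (0:ℝ)..x, Real.exp (-s ^ 2)

open Real Set Filter

theorem integral_comp_sub_right_Ioi {E : Type*} [NormedAddCommGroup E] [NormedSpace ℝ E]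
    (g : ℝ → E) (a c : ℝ) : ∫ x in Ioi a, g (x - c) = ∫ x in Ioi (a - c), g x := by
  rw [← integral_indicator measurableSet_Ioi, ← integral_indicator measurableSet_Ioi]
  conv_rhs => rw [← integral_sub_right_eq_self _ c]
  congr 1
  ext x
  simp only [indicator, mem_Ioi, sub_lt_sub_iff_right]

theorem integral_Ioi_exp_neg_sq (a : ℝ) :
    ∫ v in Ioi a, exp (-v ^ 2) = √π / 2 - ∫ v in 0..a, exp (-v ^ 2) := by
  have hint : Integrable fun v : ℝ => exp (-v ^ 2) := by
    simpa using integrable_exp_neg_mul_sq one_pos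
  have h0 : ∫ v in Ioi (0 : ℝ), exp (-v ^ 2) = √π / 2 := by
    simpa using integral_gaussian_Ioi 1
  rw [← intervalIntegral.integral_interval_add_Ioi hint.integrableOn hint.integrableOn, h0,
    intervalIntegral.integral_symm]
  ring

theorem integral_exp_neg_sq_neg (x : ℝ) :
    ∫ v in 0..(-x), exp (-v ^ 2) = -∫ v in 0..x, exp (-v ^ 2) := by
  have h := intervalIntegral.integral_comp_neg (a := 0) (b := x) fun v => exp (-v ^ 2)
  simp only [neg_sq, neg_zero] at h
  rw [intervalIntegral.integral_symm (-x) 0, ← h]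

theorem erf_neg (x : ℝ) : erf (-x) = -erf x := by
  rw [erf, erf, integral_exp_neg_sq_neg]
  ring

theorem sqrt_pi_mul_one_add_erf (x : ℝ) :
    √π * (1 + erf x) = 2 * ∫ v in Ioi (-x), exp (-v ^ 2) := by
  have hπ : √π ≠ 0 := (sqrt_pos.2 pi_pos).ne'
  rw [integral_Ioi_exp_neg_sq, integral_exp_neg_sq_neg, erf]
  field_simp
  ring

theorem integral_Ioi_exp_mul_mul_exp_neg_sq_div_four (x : ℝ) :
    ∫ t in Ioi 0, exp (x * t) * exp (-t ^ 2 / 4) =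
      2 * exp (x ^ 2) * ∫ v in Ioi (-x), exp (-v ^ 2) := by
  have hsq (t : ℝ) :
      exp (x * t) * exp (-t ^ 2 / 4) = exp (x ^ 2) * exp (-(2⁻¹ * t - x) ^ 2) := by
    rw [← exp_add, ← exp_add]
    ring_nf
  simp_rw [hsq]
  rw [integral_const_mul, integral_comp_mul_left_Ioi (fun u => exp (-(u - x) ^ 2)) 0 (by norm_num),
    integral_comp_sub_right_Ioi (fun u => exp (-u ^ 2)), mul_zero, zero_sub, inv_inv, smul_eq_mul]
  ring

noncomputable def gaussLaplaceMoment (n : ℕ) (x : ℝ) : ℝ :=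
  ∫ t in Ioi 0, t ^ n * exp (-x * t) * exp (-t ^ 2 / 4)

theorem integrableOn_pow_mul_exp_mul_mul_exp_neg_sq_div_four (n : ℕ) (c : ℝ) :
    IntegrableOn (fun t : ℝ => t ^ n * exp (c * t) * exp (-t ^ 2 / 4)) (Ioi 0) := by
  -- `c t - t² / 4 ≤ 2 c² - t² / 8` because `(t - 4 c)² ≥ 0`
  have hdom : IntegrableOn (fun t : ℝ => exp (2 * c ^ 2) * (t ^ (n : ℝ) * exp (-(1 / 8) * t ^ 2)))
      (Ioi 0) :=
    (integrableOn_rpow_mul_exp_neg_mul_sq (by norm_num)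
      (by linarith [n.cast_nonneg (α := ℝ)])).const_mul _
  refine hdom.mono' (by fun_prop) ?_
  filter_upwards [ae_restrict_mem measurableSet_Ioi] with t (ht : 0 < t)
  rw [norm_of_nonneg (by positivity), rpow_natCast, mul_assoc, ← exp_add, mul_left_comm,
    ← exp_add]
  exact mul_le_mul_of_nonneg_left (exp_le_exp.2 (by nlinarith [sq_nonneg (t - 4 * c)]))
    (by positivity)

theorem gaussLaplaceMoment_nonneg (n : ℕ) (x : ℝ) : 0 ≤ gaussLaplaceMoment n x :=
  setIntegral_nonneg measurableSet_Ioi fun t (ht : 0 < t) => by positivity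

theorem hasDerivAt_gaussLaplaceMoment (n : ℕ) (x : ℝ) :
    HasDerivAt (gaussLaplaceMoment n) (-gaussLaplaceMoment (n + 1) x) x := by
  have hF' (y t : ℝ) : HasDerivAt (fun y => t ^ n * exp (-y * t) * exp (-t ^ 2 / 4))
      (-(t ^ (n + 1) * exp (-y * t) * exp (-t ^ 2 / 4))) y :=
    ((((hasDerivAt_neg y).mul_const t).exp.const_mul (t ^ n)).mul_const _).congr_deriv (by ring)
  have hbound : ∀ᵐ t ∂volume.restrict (Ioi 0), ∀ y ∈ Metric.ball x 1,
      ‖-(t ^ (n + 1) * exp (-y * t) * exp (-t ^ 2 / 4))‖ ≤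
        t ^ (n + 1) * exp ((|x| + 1) * t) * exp (-t ^ 2 / 4) := by
    filter_upwards [ae_restrict_mem measurableSet_Ioi] with t (ht : 0 < t) y hy
    have hneg : -y ≤ |x| + 1 := by
      rw [Metric.mem_ball, dist_eq] at hy
      linarith [neg_abs_le (y - x), neg_abs_le x]
    rw [norm_neg, norm_of_nonneg (by positivity)]
    gcongr
  obtain ⟨-, hderiv⟩ := hasDerivAt_integral_of_dominated_loc_of_deriv_le
    (μ := volume.restrict (Ioi 0)) (F := fun y t => t ^ n * exp (-y * t) * exp (-t ^ 2 / 4))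
    (Metric.ball_mem_nhds x one_pos)
    (Eventually.of_forall fun y => by fun_prop)
    (integrableOn_pow_mul_exp_mul_mul_exp_neg_sq_div_four n (-x)) (by fun_prop) hbound
    (integrableOn_pow_mul_exp_mul_mul_exp_neg_sq_div_four (n + 1) (|x| + 1))
    (Eventually.of_forall fun t y _ => hF' y t)
  rwa [integral_neg] at hderiv

theorem iteratedDeriv_gaussLaplaceMoment (k n : ℕ) :
    iteratedDeriv k (gaussLaplaceMoment n) = fun x => (-1) ^ k * gaussLaplaceMoment (n + k) x := by
  induction k with
  | zero => simp
  | succ k ih =>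
    ext x
    rw [iteratedDeriv_succ, ih, ((hasDerivAt_gaussLaplaceMoment (n + k) x).const_mul _).deriv,
      pow_succ, ← add_assoc]
    ring

theorem neg_one_pow_mul_iteratedDeriv_gaussLaplaceMoment_nonneg (k n : ℕ) (x : ℝ) :
    0 ≤ (-1) ^ k * iteratedDeriv k (gaussLaplaceMoment n) x := by
  rw [iteratedDeriv_gaussLaplaceMoment, ← mul_assoc, ← pow_add, Even.neg_one_pow ⟨k, rfl⟩,
    one_mul]
  exact gaussLaplaceMoment_nonneg _ _

/-- Integral representations of `2√π e^{x²}(1 ± erf x)` and complete monotonicity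
of `x ↦ 2√π e^{x²}(1 - erf x)` on `ℝ`. -/
theorem erf_completely_monotonic :
    (∀ x : ℝ, 2 * Real.sqrt Real.pi * Real.exp (x ^ 2) * (1 + erf x) =
        2 * ∫ t in Set.Ioi (0:ℝ), Real.exp (x * t) * Real.exp (-t ^ 2 / 4)) ∧
      (∀ x : ℝ, 2 * Real.sqrt Real.pi * Real.exp (x ^ 2) * (1 - erf x) =
        2 * ∫ t in Set.Ioi (0:ℝ), Real.exp (-x * t) * Real.exp (-t ^ 2 / 4)) ∧
      ∀ n : ℕ, ∀ x : ℝ,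
        0 ≤ (-1 : ℝ) ^ n *
          iteratedDeriv n (fun x => 2 * Real.sqrt Real.pi * Real.exp (x ^ 2) * (1 - erf x)) x := by
  have one_add_erf (x : ℝ) : 2 * √π * exp (x ^ 2) * (1 + erf x) =
      2 * ∫ t in Ioi 0, exp (x * t) * exp (-t ^ 2 / 4) := by
    rw [integral_Ioi_exp_mul_mul_exp_neg_sq_div_four]
    linear_combination 2 * exp (x ^ 2) * sqrt_pi_mul_one_add_erf x
  have one_sub_erf (x : ℝ) : 2 * √π * exp (x ^ 2) * (1 - erf x) =
      2 * ∫ t in Ioi 0, exp (-x * t) * exp (-t ^ 2 / 4) := by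
    simpa only [erf_neg, neg_sq, ← sub_eq_add_neg] using one_add_erf (-x)
  refine ⟨one_add_erf, one_sub_erf, fun n x => ?_⟩
  have hmoment : (fun x => 2 * √π * exp (x ^ 2) * (1 - erf x)) =
      fun x => 2 * gaussLaplaceMoment 0 x := by
    ext x
    simp only [one_sub_erf, gaussLaplaceMoment, pow_zero, one_mul]
  rw [hmoment, iteratedDeriv_const_mul_field, mul_left_comm]
  exact mul_nonneg zero_le_two (neg_one_pow_mul_iteratedDeriv_gaussLaplaceMoment_nonneg n 0 x)
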